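/- Let H be a complex Hilbert space and L, M closed linear subspaces with Q = L ∩ M, c(L,M) < 1, and f a continuous linear functional on the closed subspace L + M satisfying f(x) = 0 for x ∈ M. Then the operator norm of f on L + M is bounded as ‖f‖_{(L+M)*} ≤ ‖f|_L‖_{L*} / √(1 − c(L,M)²), where f|_L is the restriction of f to L. -/

import Mathlib

open scoped InnerProductSpace Pointwise

/-- The inclination `c(L,M)` of two subspaces `L`, `M` of a complex Hilbert space:
the supremum of `|⟪u,v⟫| / (‖u‖‖v‖)` over nonzero `u ∈ L ⊖ Q` and nonzero `v ∈ M ⊖ Q`,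
where `Q = L ⊓ M` and `L ⊖ Q = L ⊓ Qᗮ`, `M ⊖ Q = M ⊓ Qᗮ`. -/
noncomputable def inclination {H : Type*} [NormedAddCommGroup H] [InnerProductSpace ℂ H]
    (L M : Submodule ℂ H) : ℝ :=
  sSup {r : ℝ | ∃ u ∈ L ⊓ (L ⊓ M)ᗮ, ∃ v ∈ M ⊓ (L ⊓ M)ᗮ,
    u ≠ 0 ∧ v ≠ 0 ∧ r = ‖⟪u, v⟫_ℂ‖ / (‖u‖ * ‖v‖)}

/-- The inclusion of a subspace `L` into a larger subspace `N`, as a continuous linear map. -/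
noncomputable def inclCLM {H : Type*} [NormedAddCommGroup H] [InnerProductSpace ℂ H]
    {L N : Submodule ℂ H} (h : L ≤ N) : L →L[ℂ] N :=
  (Submodule.inclusion h).mkContinuous 1 (fun x => by
    simp [Submodule.inclusion, LinearMap.codRestrict])

/-!
Write `Q = L ⊓ M`. Every `x ∈ L + M` splits orthogonally as `x = u + v + q` with `u ∈ L ⊖ Q`,
`v ∈ M ⊖ Q` and `q ∈ Q`; since `|⟪u, v⟫| ≤ c ‖u‖ ‖v‖`,
`‖x‖² ≥ ‖u + v‖² ≥ ‖u‖² - 2c‖u‖‖v‖ + ‖v‖² ≥ (1 - c²) ‖u‖²`.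
As `f` vanishes on `M ∋ v + q`, `|f x| = |f u| ≤ ‖f|_L‖ ‖u‖ ≤ ‖f|_L‖ ‖x‖ / √(1 - c²)`.
-/

section InnerProductSpace

variable {𝕜 E : Type*} [RCLike 𝕜] [NormedAddCommGroup E] [InnerProductSpace 𝕜 E]

theorem norm_sq_le_norm_add_sq_of_inner_eq_zero {x y : E} (h : ⟪x, y⟫_𝕜 = 0) :
    ‖x‖ ^ 2 ≤ ‖x + y‖ ^ 2 := by
  rw [sq, sq, norm_add_sq_eq_norm_sq_add_norm_sq_of_inner_eq_zero x y h]
  nlinarith [norm_nonneg y]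

theorem one_sub_sq_mul_norm_sq_le_norm_add_sq {u v : E} {c : ℝ}
    (h : ‖⟪u, v⟫_𝕜‖ ≤ c * (‖u‖ * ‖v‖)) :
    (1 - c ^ 2) * ‖u‖ ^ 2 ≤ ‖u + v‖ ^ 2 := by
  have hre : -(c * (‖u‖ * ‖v‖)) ≤ RCLike.re ⟪u, v⟫_𝕜 :=
    (neg_le_neg h).trans <| (neg_le_neg (RCLike.abs_re_le_norm _)).trans (neg_abs_le _)
  rw [norm_add_sq (𝕜 := 𝕜)]
  nlinarith [sq_nonneg (c * ‖u‖ - ‖v‖)]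

theorem Submodule.exists_add_add_of_mem_sup {L M : Submodule 𝕜 E}
    [(L ⊓ M).HasOrthogonalProjection] {x : E} (hx : x ∈ L ⊔ M) :
    ∃ u ∈ L ⊓ (L ⊓ M)ᗮ, ∃ v ∈ M ⊓ (L ⊓ M)ᗮ, ∃ q ∈ L ⊓ M, x = u + v + q := by
  obtain ⟨a, ha, b, hb, rfl⟩ := Submodule.mem_sup.1 hx
  set P := (L ⊓ M).starProjection
  have hPL : ∀ y, P y ∈ L := fun y => ((L ⊓ M).starProjection_apply_mem y).1
  have hPM : ∀ y, P y ∈ M := fun y => ((L ⊓ M).starProjection_apply_mem y).2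
  refine ⟨a - P a, ⟨L.sub_mem ha (hPL a), (L ⊓ M).sub_starProjection_mem_orthogonal a⟩,
    b + P a - P (b + P a), ⟨M.sub_mem (M.add_mem hb (hPM a)) (hPM _),
      (L ⊓ M).sub_starProjection_mem_orthogonal _⟩,
    P (b + P a), (L ⊓ M).starProjection_apply_mem _, by abel⟩

end InnerProductSpace

section Inclination

variable {H : Type*} [NormedAddCommGroup H] [InnerProductSpace ℂ H] {L M : Submodule ℂ H}

theorem inclination_nonneg (L M : Submodule ℂ H) : 0 ≤ inclination L M :=
  Real.sSup_nonneg fun _ ⟨_, _, _, _, _, _, hr⟩ => hr ▸ by positivity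

theorem norm_inner_le_inclination_mul {u v : H} (hu : u ∈ L ⊓ (L ⊓ M)ᗮ)
    (hv : v ∈ M ⊓ (L ⊓ M)ᗮ) : ‖⟪u, v⟫_ℂ‖ ≤ inclination L M * (‖u‖ * ‖v‖) := by
  rcases eq_or_ne u 0 with rfl | hu0
  · simp
  rcases eq_or_ne v 0 with rfl | hv0
  · simp
  rw [← div_le_iff₀ (by positivity), inclination]
  refine le_csSup ⟨1, ?_⟩ ⟨u, hu, v, hv, hu0, hv0, rfl⟩
  rintro _ ⟨u, -, v, -, -, -, rfl⟩
  exact div_le_one_of_le₀ (norm_inner_le_norm u v) (by positivity)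

theorem exists_sub_mem_and_sqrt_one_sub_inclination_sq_mul_norm_le
    [(L ⊓ M).HasOrthogonalProjection] {x : H} (hx : x ∈ L ⊔ M) :
    ∃ u ∈ L, x - u ∈ M ∧ Real.sqrt (1 - inclination L M ^ 2) * ‖u‖ ≤ ‖x‖ := by
  obtain ⟨u, hu, v, hv, q, hq, rfl⟩ := Submodule.exists_add_add_of_mem_sup hx
  have hq_orth : ⟪u + v, q⟫_ℂ = 0 :=
    (L ⊓ M).inner_left_of_mem_orthogonal hq ((L ⊓ M)ᗮ.add_mem hu.2 hv.2)
  have hsq : (1 - inclination L M ^ 2) * ‖u‖ ^ 2 ≤ ‖u + v + q‖ ^ 2 :=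
    (one_sub_sq_mul_norm_sq_le_norm_add_sq (norm_inner_le_inclination_mul hu hv)).trans
      (norm_sq_le_norm_add_sq_of_inner_eq_zero hq_orth)
  refine ⟨u, hu.1, by simpa [add_sub_cancel_left, add_assoc] using M.add_mem hv.1 hq.2, ?_⟩
  calc Real.sqrt (1 - inclination L M ^ 2) * ‖u‖
      = Real.sqrt ((1 - inclination L M ^ 2) * ‖u‖ ^ 2) := by
        rw [Real.sqrt_mul' _ (sq_nonneg _), Real.sqrt_sq (norm_nonneg _)]
    _ ≤ Real.sqrt (‖u + v + q‖ ^ 2) := Real.sqrt_le_sqrt hsq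
    _ = ‖u + v + q‖ := Real.sqrt_sq (norm_nonneg _)

theorem ContinuousLinearMap.opNorm_le_div_of_exists_sub_mem {F : Type*} [NormedAddCommGroup F]
    [NormedSpace ℂ F] (f : (L ⊔ M : Submodule ℂ H) →L[ℂ] F)
    (hfM : ∀ x : (L ⊔ M : Submodule ℂ H), (x : H) ∈ M → f x = 0) {κ : ℝ} (hκ : 0 < κ)
    (h : ∀ x ∈ L ⊔ M, ∃ u ∈ L, x - u ∈ M ∧ κ * ‖u‖ ≤ ‖x‖) :
    ‖f‖ ≤ ‖f.comp (inclCLM (le_sup_left : L ≤ L ⊔ M))‖ / κ := by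
  refine f.opNorm_le_bound (by positivity) fun x => ?_
  obtain ⟨u, hu, hxu, hκu⟩ := h x x.2
  have hfx : f x = f.comp (inclCLM le_sup_left) ⟨u, hu⟩ :=
    sub_eq_zero.1 (by rw [ContinuousLinearMap.comp_apply, ← map_sub]; exact hfM _ hxu)
  calc ‖f x‖ ≤ ‖f.comp (inclCLM le_sup_left)‖ * ‖u‖ := by
        rw [hfx]; exact (f.comp (inclCLM le_sup_left)).le_opNorm (⟨u, hu⟩ : L)
    _ ≤ ‖f.comp (inclCLM le_sup_left)‖ * (‖x‖ / κ) := by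
        gcongr
        rwa [le_div_iff₀' hκ]
    _ = _ := by ring

end Inclination

theorem stmt_14_general {H : Type*} [NormedAddCommGroup H] [InnerProductSpace ℂ H] [CompleteSpace H]
    (L M : Submodule ℂ H) (hL : IsClosed (L : Set H)) (hM : IsClosed (M : Set H))
    (hc : inclination L M < 1)
    (f : (L ⊔ M : Submodule ℂ H) →L[ℂ] ℂ)
    (hfM : ∀ x : (L ⊔ M : Submodule ℂ H), (x : H) ∈ M → f x = 0) :
    ‖f‖ ≤ ‖f.comp (inclCLM (le_sup_left : L ≤ L ⊔ M))‖ /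
      Real.sqrt (1 - inclination L M ^ 2) := by
  have : CompleteSpace (L ⊓ M : Submodule ℂ H) := (hL.inter hM).completeSpace_coe
  have hc0 := inclination_nonneg L M
  exact f.opNorm_le_div_of_exists_sub_mem hfM (Real.sqrt_pos.2 (by nlinarith))
    fun _ hx => exists_sub_mem_and_sqrt_one_sub_inclination_sq_mul_norm_le hx

theorem stmt_14 {H : Type*} [NormedAddCommGroup H] [InnerProductSpace ℂ H] [CompleteSpace H]
    (L M : Submodule ℂ H) (hL : IsClosed (L : Set H)) (hM : IsClosed (M : Set H))
    (hLQ : ∃ u ∈ L ⊓ (L ⊓ M)ᗮ, u ≠ 0) (hMQ : ∃ v ∈ M ⊓ (L ⊓ M)ᗮ, v ≠ 0)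
    (hc : inclination L M < 1)
    (f : (L ⊔ M : Submodule ℂ H) →L[ℂ] ℂ)
    (hfM : ∀ x : (L ⊔ M : Submodule ℂ H), (x : H) ∈ M → f x = 0) :
    ‖f‖ ≤ ‖f.comp (inclCLM (le_sup_left : L ≤ L ⊔ M))‖ /
      Real.sqrt (1 - inclination L M ^ 2) :=
  stmt_14_general L M hL hM hc f hfM
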